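/- The curves x⁴ − x²y² + xy³ + Ky⁴ = 1 for −25/72 ≤ K < U are not singular at infinity: set U = (1/24)·(4 + (31+3√57)·(46+6√57)^{−1/3} + (100+12√57)·(46+6√57)^{−2/3}). For every real number K with −25/72 ≤ K < U and every point p ∈ ℝ² with p ≠ 0, p in the closure of the cone ℝ_{>0}·H_{1,K}, and h_{1,K}(p) = 0, the differential of h_{1,K} at p is nonzero. -/

import Mathlib

/-!
Common definitions: the quartic polynomial `hLK L K (x,y) = x⁴ − x²y² + L·x·y³ + K·y⁴` on ℝ²,
the Hessian determinant of a function on ℝ², and the curve `Hcurve L K = H_{L,K}`,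
the connected component containing (1,0) of the hyperbolic points on the level set {h = 1}.
-/

noncomputable section
open Matrix

/-- `h_{L,K}(x,y) = x⁴ − x²y² + L·x·y³ + K·y⁴`. -/
def hLK (L K : ℝ) (v : Fin 2 → ℝ) : ℝ :=
  v 0 ^ 4 - v 0 ^ 2 * v 1 ^ 2 + L * v 0 * v 1 ^ 3 + K * v 1 ^ 4

/-- Determinant of the Hessian matrix of `f : ℝ² → ℝ` at `p`. -/
def hessDet2 (f : (Fin 2 → ℝ) → ℝ) (p : Fin 2 → ℝ) : ℝ :=
  Matrix.det (Matrix.of fun i j : Fin 2 =>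
    iteratedFDeriv ℝ 2 f p ![Pi.single i 1, Pi.single j 1])

/-- `H_{L,K}`: the connected component containing `(1,0)` of
`{p ∈ ℝ² : h_{L,K}(p) = 1 and p is a hyperbolic point of h_{L,K}}`. -/
def Hcurve (L K : ℝ) : Set (Fin 2 → ℝ) :=
  connectedComponentIn {p | hLK L K p = 1 ∧ hessDet2 (hLK L K) p < 0} ![1, 0]

/-- The constant `U` of Theorem 3.2. -/
def Uconst : ℝ :=
  (1/24) * (4 + (31 + 3 * Real.sqrt 57) * (46 + 6 * Real.sqrt 57) ^ (-(1:ℝ)/3) +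
    (100 + 12 * Real.sqrt 57) * (46 + 6 * Real.sqrt 57) ^ (-(2:ℝ)/3))

/-!
A nonzero singular point `p` of the binary quartic `h = h_{1,K}` is a real multiple root. The
`x`-partial `4x³ - 2xy² + y³` forces `p₁ ≠ 0`, and then `t = p₀ / p₁` is a common root of
`4t³ - 2t + 1` and `t⁴ - t² + t + K`; eliminating `t⁴` gives `K = t²/2 - 3t/4`. The cubic has a
single real root, and Cardano's formula for it turns `t²/2 - 3t/4` into exactly `U`. So `h`
can only have a real singular direction when `K = U`.
-/

lemma hasFDerivAt_hLK (L K : ℝ) (p : Fin 2 → ℝ) :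
    HasFDerivAt (hLK L K)
      ((4 * p 0 ^ 3 - 2 * p 0 * p 1 ^ 2 + L * p 1 ^ 3) •
          (ContinuousLinearMap.proj 0 : (Fin 2 → ℝ) →L[ℝ] ℝ)
        + (-2 * p 0 ^ 2 * p 1 + 3 * L * p 0 * p 1 ^ 2 + 4 * K * p 1 ^ 3) •
          (ContinuousLinearMap.proj 1 : (Fin 2 → ℝ) →L[ℝ] ℝ)) p := by
  have hx : HasFDerivAt (fun v : Fin 2 → ℝ => v 0)
      (ContinuousLinearMap.proj 0 : (Fin 2 → ℝ) →L[ℝ] ℝ) p := hasFDerivAt_apply 0 p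
  have hy : HasFDerivAt (fun v : Fin 2 → ℝ => v 1)
      (ContinuousLinearMap.proj 1 : (Fin 2 → ℝ) →L[ℝ] ℝ) p := hasFDerivAt_apply 1 p
  have H := (((hx.pow 4).sub ((hx.pow 2).mul (hy.pow 2))).add
    ((hx.const_mul L).mul (hy.pow 3))).add ((hy.pow 4).const_mul K)
  refine (H.congr_fderiv ?_).congr_of_eventuallyEq (.of_eq rfl)
  ext v
  simp only [Nat.add_one_sub_one, nsmul_eq_mul, Nat.cast_ofNat, pow_one, _root_.add_apply,
    _root_.sub_apply, _root_.smul_apply, ContinuousLinearMap.proj_apply, smul_eq_mul, neg_mul]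
  ring

lemma fderiv_hLK_apply_single_zero (L K : ℝ) (p : Fin 2 → ℝ) :
    fderiv ℝ (hLK L K) p (Pi.single 0 1) = 4 * p 0 ^ 3 - 2 * p 0 * p 1 ^ 2 + L * p 1 ^ 3 := by
  simp [(hasFDerivAt_hLK L K p).fderiv]

lemma exists_root_of_hLK_eq_zero_of_fderiv_eq_zero {L K : ℝ} {p : Fin 2 → ℝ} (hp0 : p ≠ 0)
    (hpz : hLK L K p = 0) (hdp : fderiv ℝ (hLK L K) p = 0) :
    ∃ t : ℝ, 4 * t ^ 3 - 2 * t + L = 0 ∧ K = t ^ 2 / 2 - 3 * L * t / 4 := by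
  have hx : 4 * p 0 ^ 3 - 2 * p 0 * p 1 ^ 2 + L * p 1 ^ 3 = 0 := by
    rw [← fderiv_hLK_apply_single_zero, hdp]
    rfl
  have hy : p 1 ≠ 0 := by
    intro hy
    have : p 0 = 0 := by simpa [hy] using hx
    exact hp0 (funext fun i => by fin_cases i <;> assumption)
  have hcubic : 4 * (p 0 / p 1) ^ 3 - 2 * (p 0 / p 1) + L = 0 := by
    field_simp
    linear_combination hx
  refine ⟨p 0 / p 1, hcubic, ?_⟩
  have hquartic : (p 0 / p 1) ^ 4 - (p 0 / p 1) ^ 2 + L * (p 0 / p 1) + K = 0 := by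
    unfold hLK at hpz
    field_simp
    linear_combination hpz
  linear_combination hquartic - (p 0 / p 1) / 4 * hcubic

lemma lt_of_cubic_eq_zero {t : ℝ} (ht : 4 * t ^ 3 - 2 * t + 1 = 0) : t < -41 / 50 := by
  by_contra! h
  nlinarith [mul_nonneg (by linarith : (0 : ℝ) ≤ t + 41 / 50) (sq_nonneg (t - 41 / 100))]

lemma cubic_eq_zero_unique {t u : ℝ} (ht : 4 * t ^ 3 - 2 * t + 1 = 0)
    (hu : 4 * u ^ 3 - 2 * u + 1 = 0) : t = u := by
  have ht' := lt_of_cubic_eq_zero ht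
  have hu' := lt_of_cubic_eq_zero hu
  have hfac : (t - u) * (4 * t ^ 2 + 4 * t * u + 4 * u ^ 2 - 2) = 0 := by
    linear_combination ht - hu
  have hpos : 0 < 4 * t ^ 2 + 4 * t * u + 4 * u ^ 2 - 2 := by nlinarith
  exact sub_eq_zero.1 ((mul_eq_zero.1 hfac).resolve_right hpos.ne')

lemma exists_Uconst_eq : ∃ d : ℝ, d ^ 3 - 12 * d - 92 = 0 ∧ Uconst = d * (d + 4) / 48 := by
  set s := Real.sqrt 57
  have hs : s ^ 2 = 57 := Real.sq_sqrt (by norm_num)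
  have hA : (0 : ℝ) < 46 + 6 * s := by positivity
  set c := (46 + 6 * s) ^ ((1 : ℝ) / 3) with hc_def
  have hc0 : c ≠ 0 := (Real.rpow_pos_of_pos hA _).ne'
  have hc3 : c ^ 3 = 46 + 6 * s := by
    rw [hc_def, ← Real.rpow_natCast, ← Real.rpow_mul hA.le]
    norm_num
  have hU : Uconst = (4 + (31 + 3 * s) / c + (100 + 12 * s) / c ^ 2) / 24 := by
    have h1 : (46 + 6 * s) ^ (-(1 : ℝ) / 3) = c⁻¹ := by
      rw [neg_div, Real.rpow_neg hA.le]
    have h2 : (46 + 6 * s) ^ (-(2 : ℝ) / 3) = (c ^ 2)⁻¹ := by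
      rw [neg_div, Real.rpow_neg hA.le, hc_def, ← Real.rpow_natCast, ← Real.rpow_mul hA.le]
      norm_num
    rw [Uconst, h1, h2]
    ring
  have hs' : s = (c ^ 3 - 46) / 6 := by linear_combination -hc3 / 6
  have hc6 : c ^ 6 - 92 * c ^ 3 + 64 = 0 := by
    rw [hs'] at hs
    linear_combination 36 * hs
  -- `c³` and `64 / c³` are the conjugates `46 ± 6√57`, so `c + 4 / c` is a Cardano root
  refine ⟨c + 4 / c, ?_, ?_⟩
  · field_simp
    linear_combination hc6
  · rw [hU, hs']
    field_simp
    ring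

lemma Uconst_eq_of_cubic_eq_zero {t : ℝ} (ht : 4 * t ^ 3 - 2 * t + 1 = 0) :
    Uconst = t ^ 2 / 2 - 3 * t / 4 := by
  obtain ⟨d, hd, hU⟩ := exists_Uconst_eq
  -- `(8 - 2d - d²) / 36` comes from an integer-relation search in `ℚ(d)`; the coefficients
  -- below are quotients by `d³ - 12d - 92`
  have hroot : 4 * ((8 - 2 * d - d ^ 2) / 36) ^ 3 - 2 * ((8 - 2 * d - d ^ 2) / 36) + 1 = 0 := by
    linear_combination (-(d ^ 3 + 6 * d ^ 2 + 76) / 11664) * hd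
  rw [cubic_eq_zero_unique ht hroot, hU]
  linear_combination (-(d + 4) / 2592) * hd

theorem curves_1K_not_singular_at_infinity_general (K : ℝ)
    (hK2 : K < Uconst)
    (p : Fin 2 → ℝ) (hp0 : p ≠ 0)
    (hpz : hLK 1 K p = 0) :
    fderiv ℝ (hLK 1 K) p ≠ 0 := by
  intro hdp
  obtain ⟨t, ht, hK⟩ := exists_root_of_hLK_eq_zero_of_fderiv_eq_zero hp0 hpz hdp
  have hKU : K = Uconst := by
    rw [Uconst_eq_of_cubic_eq_zero ht, hK]
    ring
  exact hK2.ne hKU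

/-- **The curves `x⁴ − x²y² + xy³ + Ky⁴ = 1` with `−25/72 ≤ K < U` are not singular at
infinity.** For every nonzero point `p` in the closure of the cone `ℝ_{>0}·H_{1,K}` with
`h_{1,K}(p) = 0`, the differential of `h_{1,K}` at `p` is nonzero. -/
theorem curves_1K_not_singular_at_infinity (K : ℝ)
    (hK1 : -(25/72) ≤ K) (hK2 : K < Uconst)
    (p : Fin 2 → ℝ) (hp0 : p ≠ 0)
    (hpc : p ∈ closure {x : Fin 2 → ℝ | ∃ l : ℝ, 0 < l ∧ ∃ q ∈ Hcurve 1 K, x = l • q})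
    (hpz : hLK 1 K p = 0) :
    fderiv ℝ (hLK 1 K) p ≠ 0 :=
  curves_1K_not_singular_at_infinity_general K hK2 p hp0 hpz
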